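/- Weak duality for the level-ℓ Delsarte hierarchy: suppose g : ({0,1}^n)^ℓ → ℝ satisfies ĝ ≥ 0, ĝ(0) > 0, and g(X) ≤ 0 for every nonzero X = (x_1,...,x_ℓ) such that each row x_i is either 0 or has Hamming weight ≥ d. Then A(n,d)^ℓ ≤ g(0)/ĝ(0), where A(n,d) is the maximum size of a binary code of length n and minimum distance d. -/

import Mathlib

open Finset

lemma zmodUniv : (univ : Finset (ZMod 2)) = {0, 1} := by decide

lemma sgn_add (a b : ZMod 2) : ((-1:ℝ))^((a+b).val) = (-1)^a.val * (-1)^b.val := by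
  obtain rfl | rfl : a = 0 ∨ a = 1 := by revert a; decide
  all_goals obtain rfl | rfl : b = 0 ∨ b = 1 := by revert b; decide
  all_goals
    norm_num [show ((2:ZMod 2)).val = 0 from rfl, show ((1:ZMod 2)).val = 1 from rfl]

lemma sumZMod (y : ZMod 2) : ∑ a : ZMod 2, ((-1:ℝ))^((a*y).val) = if y = 0 then 2 else 0 := by
  rw [zmodUniv, Finset.sum_insert (by decide), Finset.sum_singleton]
  obtain rfl | rfl : y = 0 ∨ y = 1 := by revert y; decide
  all_goals
    norm_num [show ((1:ZMod 2)).val = 1 from rfl, show ((0:ZMod 2)).val = 0 from rfl]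

noncomputable def chi {ℓ n : ℕ} (X Y : Fin ℓ → Fin n → ZMod 2) : ℝ :=
  (-1:ℝ)^(∑ i, ∑ j, (X i j * Y i j).val)

lemma chi_prod {ℓ n : ℕ} (X Y : Fin ℓ → Fin n → ZMod 2) :
    chi X Y = ∏ i, ∏ j, (-1:ℝ)^((X i j * Y i j).val) := by
  rw [chi, ← Finset.prod_pow_eq_pow_sum]
  exact Finset.prod_congr rfl fun i _ => (Finset.prod_pow_eq_pow_sum _ _ _).symm

lemma chi_mul {ℓ n : ℕ} (X Y Z : Fin ℓ → Fin n → ZMod 2) :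
    chi X Y * chi X Z = chi X (Y + Z) := by
  simp only [chi_prod, ← Finset.prod_mul_distrib]
  refine Finset.prod_congr rfl fun i _ => Finset.prod_congr rfl fun j _ => ?_
  have : X i j * (Y + Z) i j = X i j * Y i j + X i j * Z i j := by simp [mul_add]
  rw [this, sgn_add]

lemma chi_zero_left {ℓ n : ℕ} (Y : Fin ℓ → Fin n → ZMod 2) : chi 0 Y = 1 := by
  simp [chi]

lemma sum_of_prod {ℓ n : ℕ} (f : Fin ℓ → (Fin n → ZMod 2) → ℝ) :
    ∑ X : Fin ℓ → Fin n → ZMod 2, ∏ i, f i (X i) = ∏ i, ∑ y : Fin n → ZMod 2, f i y :=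
  (Fintype.prod_sum (f := f)).symm

lemma sum_of_prod' {n : ℕ} (f : Fin n → ZMod 2 → ℝ) :
    ∑ y : Fin n → ZMod 2, ∏ j, f j (y j) = ∏ j, ∑ a : ZMod 2, f j a :=
  (Fintype.prod_sum (f := f)).symm

lemma sum_chi {ℓ n : ℕ} (Y : Fin ℓ → Fin n → ZMod 2) :
    ∑ X, chi X Y = if Y = 0 then (2:ℝ)^(ℓ*n) else 0 := by
  have : ∑ X, chi X Y = ∏ i, ∏ j, (if Y i j = 0 then (2:ℝ) else 0) := by
    simp only [chi_prod]
    rw [sum_of_prod (fun i y => ∏ j, (-1:ℝ)^((y j * Y i j).val))]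
    refine Finset.prod_congr rfl fun i _ => ?_
    rw [sum_of_prod' (fun j a => (-1:ℝ)^((a * Y i j).val))]
    exact Finset.prod_congr rfl fun j _ => sumZMod _
  rw [this]
  by_cases h : Y = 0
  · subst h
    simp only [Pi.zero_apply, if_true, if_pos rfl, Finset.prod_const, Finset.card_univ,
      Fintype.card_fin]
    ring
  · obtain ⟨i, hi⟩ : ∃ i, Y i ≠ 0 := by
      by_contra hc; push_neg at hc; exact h (funext hc)
    obtain ⟨j, hj⟩ : ∃ j, Y i j ≠ 0 := by
      by_contra hc; push_neg at hc; exact hi (funext hc)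
    rw [if_neg h]
    exact Finset.prod_eq_zero (mem_univ i) (Finset.prod_eq_zero (mem_univ j) (if_neg hj))

lemma two_add_eq_zero_iff {A : Type*} [AddCommGroup A] (hself : ∀ a : A, a + a = 0)
    (x y : A) : x + y = 0 ↔ y = x := by
  constructor
  · intro h
    have hx : x = -y := add_eq_zero_iff_eq_neg.mp h
    have : -y = y := neg_eq_of_add_eq_zero_left (hself y)
    rw [this] at hx; exact hx.symm
  · rintro rfl; exact hself _

lemma mat_self_add {ℓ n : ℕ} (X : Fin ℓ → Fin n → ZMod 2) : X + X = 0 := by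
  funext i j; exact CharTwo.add_self_eq_zero _

lemma vec_self_add {n : ℕ} (x : Fin n → ZMod 2) : x + x = 0 := by
  funext j; exact CharTwo.add_self_eq_zero _

lemma parseval {ℓ n : ℕ} (f g : (Fin ℓ → Fin n → ZMod 2) → ℝ) :
    ∑ X, (∑ Y, f Y * chi X Y) * (∑ Z, g Z * chi X Z)
      = (2:ℝ)^(ℓ*n) * ∑ Y, f Y * g Y := by
  have h1 : ∀ X, (∑ Y, f Y * chi X Y) * (∑ Z, g Z * chi X Z)
      = ∑ Y, ∑ Z, f Y * g Z * chi X (Y + Z) := by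
    intro X
    rw [Finset.sum_mul_sum]
    exact Finset.sum_congr rfl fun Y _ => Finset.sum_congr rfl fun Z _ => by
      rw [← chi_mul]; ring
  simp_rw [h1]
  rw [Finset.sum_comm]
  have h2 : ∀ Y, ∑ X, ∑ Z, f Y * g Z * chi X (Y + Z) = f Y * g Y * (2:ℝ)^(ℓ*n) := by
    intro Y
    rw [Finset.sum_comm]
    have h3 : ∀ Z, ∑ X, f Y * g Z * chi X (Y + Z)
        = f Y * g Z * (if Y + Z = 0 then (2:ℝ)^(ℓ*n) else 0) := by
      intro Z; rw [← Finset.mul_sum, sum_chi]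
    simp_rw [h3, two_add_eq_zero_iff mat_self_add]
    simp [mul_ite, mul_zero]
  simp_rw [h2]
  rw [← Finset.sum_mul]; ring

/-- Hamming weight of a vector in `{0,1}^n`. -/
def wt {n : ℕ} (x : Fin n → ZMod 2) : ℕ := (Finset.univ.filter fun i => x i ≠ 0).card

/-- Fourier transform on `({0,1}^n)^ℓ ≅ {0,1}^{ℓn}`. -/
noncomputable def ftM {ℓ n : ℕ} (f : (Fin ℓ → Fin n → ZMod 2) → ℝ) :
    (Fin ℓ → Fin n → ZMod 2) → ℝ :=
  fun X => (∑ Y, f Y * (-1:ℝ)^(∑ i, ∑ j, (X i j * Y i j).val)) / (2:ℝ)^(ℓ*n)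

/-- Weak duality for the level-`ℓ` Delsarte hierarchy: a dual feasible `g` upper bounds
`|C|^ℓ` for every code `C` of minimum distance at least `d`. -/
theorem delsarte_hierarchy_weak_duality (n d ℓ : ℕ)
    (g : (Fin ℓ → Fin n → ZMod 2) → ℝ)
    (hg1 : ∀ X, 0 ≤ ftM g X)
    (hg2 : 0 < ftM g 0)
    (hg3 : ∀ X : Fin ℓ → Fin n → ZMod 2, X ≠ 0 →
      (∀ i, X i = 0 ∨ d ≤ wt (X i)) → g X ≤ 0)
    (C : Finset (Fin n → ZMod 2))
    (hC : ∀ x ∈ C, ∀ y ∈ C, x ≠ y → d ≤ wt (x + y)) :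
    (C.card : ℝ)^ℓ ≤ g 0 / ftM g 0 := by
  classical
  set N : ℝ := (2:ℝ)^(ℓ*n) with hN
  have hNpos : 0 < N := by positivity
  have hftM : ∀ (f : (Fin ℓ → Fin n → ZMod 2) → ℝ) X,
      ftM f X = (∑ Y, f Y * chi X Y) / N := fun f X => rfl
  set h : (Fin n → ZMod 2) → ℝ :=
    fun x => (((C ×ˢ C).filter fun p => p.1 + p.2 = x).card : ℝ) with hh
  set F : (Fin ℓ → Fin n → ZMod 2) → ℝ := fun X => ∏ i, h (X i) with hF
  have h_nonneg : ∀ x, 0 ≤ h x := fun x => Nat.cast_nonneg _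
  have F_nonneg : ∀ X, 0 ≤ F X := fun X => Finset.prod_nonneg fun i _ => h_nonneg _
  -- h 0 = |C|
  have h_zero : h 0 = (C.card : ℝ) := by
    have e1 : (C ×ˢ C).filter (fun p => p.1 + p.2 = 0) = C.image (fun a => (a, a)) := by
      ext p
      simp only [Finset.mem_filter, Finset.mem_product, Finset.mem_image,
        two_add_eq_zero_iff vec_self_add]
      constructor
      · rintro ⟨⟨h1, h2⟩, h3⟩
        exact ⟨p.1, h1, Prod.ext rfl h3.symm⟩
      · rintro ⟨a, ha, rfl⟩
        exact ⟨⟨ha, ha⟩, rfl⟩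
    rw [hh]
    simp only [e1]
    rw [Finset.card_image_of_injective _ (fun a b hab => (Prod.mk.injEq _ _ _ _ ▸ hab : _ ∧ _).1)]
  -- ∑ h = |C|^2
  have h_sum : ∑ x, h x = (C.card : ℝ)^2 := by
    have e1 : (C ×ˢ C).card
        = ∑ x : Fin n → ZMod 2, ((C ×ˢ C).filter fun p => p.1 + p.2 = x).card :=
      Finset.card_eq_sum_card_fiberwise fun p _ => Finset.mem_univ _
    rw [hh, ← Nat.cast_sum, ← e1, Finset.card_product]
    push_cast; ring
  have h_support : ∀ x, h x ≠ 0 → x = 0 ∨ d ≤ wt x := by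
    intro x hx
    have hne : ((C ×ˢ C).filter fun p => p.1 + p.2 = x).Nonempty := by
      by_contra hemp
      rw [Finset.not_nonempty_iff_eq_empty] at hemp
      exact hx (by simp [hh, hemp])
    obtain ⟨p, hp⟩ := hne
    rw [Finset.mem_filter, Finset.mem_product] at hp
    obtain ⟨⟨hp1, hp2⟩, hp3⟩ := hp
    by_cases heq : p.1 = p.2
    · left; rw [← hp3, heq, vec_self_add]
    · right; rw [← hp3]; exact hC p.1 hp1 p.2 hp2 heq
  have F_zero : F 0 = (C.card : ℝ)^ℓ := by
    rw [hF]; simp [h_zero]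
  have F_sum : ∑ X, F X = ((C.card : ℝ)^2)^ℓ := by
    rw [hF, sum_of_prod (fun _ y => h y)]
    simp [h_sum]
  have ftMF_zero : ftM F 0 = ((C.card : ℝ)^2)^ℓ / N := by
    rw [hftM]
    simp only [chi_zero_left, mul_one]
    rw [F_sum]
  -- nonnegative Fourier coefficients of F
  have ftMF_nonneg : ∀ X, 0 ≤ ftM F X := by
    intro X
    rw [hftM]
    apply div_nonneg _ hNpos.le
    have e1 : ∑ Y, F Y * chi X Y
        = ∏ i, ∑ y : Fin n → ZMod 2, h y * ∏ j, (-1:ℝ)^((X i j * y j).val) := by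
      rw [← sum_of_prod (fun i y => h y * ∏ j, (-1:ℝ)^((X i j * y j).val))]
      refine Finset.sum_congr rfl fun Y _ => ?_
      rw [hF, chi_prod, ← Finset.prod_mul_distrib]
    rw [e1]
    refine Finset.prod_nonneg fun i _ => ?_
    set c : (Fin n → ZMod 2) → ℝ := fun y => ∏ j, (-1:ℝ)^((X i j * y j).val) with hc
    have step1 : ∑ y, h y * c y = ∑ p ∈ C ×ˢ C, c (p.1 + p.2) := by
      rw [← Finset.sum_fiberwise_of_maps_to (g := fun p : (Fin n → ZMod 2) × (Fin n → ZMod 2) => p.1 + p.2)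
        (fun p _ => Finset.mem_univ _) (fun p => c (p.1 + p.2))]
      refine Finset.sum_congr rfl fun y _ => ?_
      have hcg : ∀ p ∈ (C ×ˢ C).filter (fun p => p.1 + p.2 = y), c (p.1 + p.2) = c y := by
        intro p hp; rw [(Finset.mem_filter.mp hp).2]
      rw [Finset.sum_congr rfl hcg, Finset.sum_const, nsmul_eq_mul]
    have step2 : ∀ a b : Fin n → ZMod 2, c (a + b) = c a * c b := by
      intro a b
      rw [hc]
      simp only [← Finset.prod_mul_distrib]
      refine Finset.prod_congr rfl fun j _ => ?_
      have : X i j * (a + b) j = X i j * a j + X i j * b j := by simp [mul_add]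
      rw [this, sgn_add]
    rw [step1, Finset.sum_product]
    simp_rw [step2]
    have : ∑ a ∈ C, ∑ b ∈ C, c a * c b = (∑ a ∈ C, c a) * (∑ b ∈ C, c b) :=
      (Finset.sum_mul_sum _ _ _ _).symm
    rw [this, ← sq]
    exact sq_nonneg _
  -- support condition
  have F_support : ∀ Y, Y ≠ 0 → F Y * g Y ≤ 0 := by
    intro Y hY
    by_cases hFY : F Y = 0
    · simp [hFY]
    · have hrows : ∀ i, Y i = 0 ∨ d ≤ wt (Y i) := by
        intro i
        refine h_support (Y i) fun h0 => hFY ?_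
        rw [hF]
        exact Finset.prod_eq_zero (Finset.mem_univ i) h0
      exact mul_nonpos_of_nonneg_of_nonpos (F_nonneg Y) (hg3 Y hY hrows)
  have sum_le : ∑ Y, F Y * g Y ≤ F 0 * g 0 := by
    rw [← Finset.add_sum_erase Finset.univ (fun Y => F Y * g Y) (Finset.mem_univ 0)]
    have : ∑ Y ∈ Finset.univ.erase 0, F Y * g Y ≤ 0 :=
      Finset.sum_nonpos fun Y hY => F_support Y (Finset.ne_of_mem_erase hY)
    linarith
  -- Parseval
  have par : N * ∑ X, ftM F X * ftM g X = ∑ Y, F Y * g Y := by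
    have e1 : ∀ X, ftM F X * ftM g X
        = ((∑ Y, F Y * chi X Y) * (∑ Z, g Z * chi X Z)) / (N * N) := by
      intro X; rw [hftM, hftM, div_mul_div_comm]
    simp_rw [e1]
    rw [← Finset.sum_div, parseval F g, ← hN]
    field_simp
  have lb : N * (ftM F 0 * ftM g 0) ≤ N * ∑ X, ftM F X * ftM g X := by
    apply mul_le_mul_of_nonneg_left _ hNpos.le
    exact Finset.single_le_sum (fun X _ => mul_nonneg (ftMF_nonneg X) (hg1 X))
      (Finset.mem_univ 0)
  have main : ((C.card : ℝ)^2)^ℓ * ftM g 0 ≤ (C.card : ℝ)^ℓ * g 0 := by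
    have e : N * (ftM F 0 * ftM g 0) = ((C.card : ℝ)^2)^ℓ * ftM g 0 := by
      rw [ftMF_zero]
      field_simp
    calc ((C.card : ℝ)^2)^ℓ * ftM g 0 = N * (ftM F 0 * ftM g 0) := e.symm
      _ ≤ N * ∑ X, ftM F X * ftM g X := lb
      _ = ∑ Y, F Y * g Y := par
      _ ≤ F 0 * g 0 := sum_le
      _ = (C.card : ℝ)^ℓ * g 0 := by rw [F_zero]
  by_cases hc : (C.card : ℝ)^ℓ = 0
  · rw [hc]
    apply div_nonneg _ hg2.le
    -- g 0 = ∑ ftM g ≥ 0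
    have gsum : ∑ X, ftM g X = g 0 := by
      simp_rw [hftM, ← Finset.sum_div]
      rw [Finset.sum_comm]
      have e : ∀ Y, ∑ X, g Y * chi X Y = g Y * (if Y = 0 then N else 0) := by
        intro Y; rw [← Finset.mul_sum, sum_chi, ← hN]
      simp_rw [e]
      simp only [mul_ite, mul_zero]
      rw [Finset.sum_ite_eq' Finset.univ (0 : Fin ℓ → Fin n → ZMod 2) (fun Y => g Y * N)]
      simp only [Finset.mem_univ, if_true]
      field_simp
    rw [← gsum]
    exact Finset.sum_nonneg fun X _ => hg1 X
  · have hpos : 0 < (C.card : ℝ)^ℓ := lt_of_le_of_ne (by positivity) (Ne.symm hc)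
    rw [le_div_iff₀ hg2]
    have h2 : (C.card : ℝ)^ℓ * ((C.card : ℝ)^ℓ * ftM g 0) ≤ (C.card : ℝ)^ℓ * g 0 := by
      calc (C.card : ℝ)^ℓ * ((C.card : ℝ)^ℓ * ftM g 0)
          = ((C.card : ℝ)^2)^ℓ * ftM g 0 := by ring
        _ ≤ (C.card : ℝ)^ℓ * g 0 := main
    exact le_of_mul_le_mul_left h2 hpos
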